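/- arXiv:1808.09933 — 3 statements merged into one kernel-verified Lean document; each statement's English description precedes it below -/
import Mathlib

section
/- Let (X, d) be a finite metric space covered by subsets U_i, and suppose each pair of cover elements U_i, U_j is ε-separated, meaning min over x ∈ U_i \ U_j and y ∈ U_j \ U_i of d(x,y) > ε. Then every simplex of the Vietoris–Rips complex of X at scale parameter at most ε is contained in the Vietoris–Rips complex (at the same scale) of some single cover element U_i. -/
/-- Two subsets of a metric space are `ε`-separated if points belonging
to one but not the other are at distance more than `ε` apart. -/
def EpsSeparated {X : Type*} [MetricSpace X] (ε : ℝ) (U V : Set X) : Prop :=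
  ∀ x ∈ U \ V, ∀ y ∈ V \ U, ε < dist x y

/-- A finite subset `σ` is a simplex of the Vietoris–Rips complex at scale `r`
if it is nonempty and has diameter at most `r`. -/
def IsVRSimplex {X : Type*} [MetricSpace X] (r : ℝ) (σ : Finset X) : Prop :=
  σ.Nonempty ∧ ∀ x ∈ σ, ∀ y ∈ σ, dist x y ≤ r

/-- If a finite metric space is covered by pairwise `ε`-separated subsets, then every
simplex of the Vietoris–Rips complex at any scale `r ≤ ε` lies in the Vietoris–Rips
complex (at the same scale) of a single cover element. -/
theorem vr_simplex_in_single_cover_element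
    {X : Type*} [MetricSpace X] [Fintype X] {I : Type*}
    (U : I → Set X) (hcov : (⋃ i, U i) = Set.univ)
    (ε : ℝ) (hsep : ∀ i j, i ≠ j → EpsSeparated ε (U i) (U j))
    (r : ℝ) (hr : r ≤ ε) (σ : Finset X) (hσ : IsVRSimplex r σ) :
    ∃ i, (↑σ : Set X) ⊆ U i ∧ IsVRSimplex r σ := by
  obtain ⟨hne, hdiam⟩ := hσ
  have hmem : ∀ x : X, ∃ i, x ∈ U i := by
    intro x
    have : x ∈ ⋃ i, U i := hcov ▸ Set.mem_univ x
    simpa using this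
  suffices h : ∀ τ : Finset X, (∀ x ∈ τ, ∀ y ∈ τ, dist x y ≤ r) → τ.Nonempty →
      ∃ i, (↑τ : Set X) ⊆ U i by
    obtain ⟨i, hi⟩ := h σ hdiam hne
    exact ⟨i, hi, hne, hdiam⟩
  intro τ
  induction τ using Finset.cons_induction with
  | empty => intro _ h; exact absurd h (by simp)
  | cons y τ hy ih =>
    intro hd _
    rcases τ.eq_empty_or_nonempty with hτ | hτ
    · subst hτ
      obtain ⟨i, hi⟩ := hmem y
      exact ⟨i, by simpa using hi⟩
    · obtain ⟨i, hi⟩ := ih (fun x hx z hz =>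
        hd x (Finset.mem_cons_of_mem hx) z (Finset.mem_cons_of_mem hz)) hτ
      by_cases hyi : y ∈ U i
      · refine ⟨i, ?_⟩
        intro x hx
        rcases (by simpa using hx : x = y ∨ x ∈ τ) with h | h
        · exact h ▸ hyi
        · exact hi h
      · obtain ⟨j, hj⟩ := hmem y
        have hij : i ≠ j := fun h => hyi (h ▸ hj)
        refine ⟨j, ?_⟩
        intro x hx
        rcases (by simpa using hx : x = y ∨ x ∈ τ) with h | h
        · exact h ▸ hj
        · by_contra hxj
          have hlt := hsep i j hij x ⟨hi h, hxj⟩ y ⟨hj, hyi⟩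
          have hle : dist x y ≤ r := hd x (Finset.mem_cons_of_mem h) y
            (Finset.mem_cons_self y τ)
          linarith
end

section
/- Let X be a metric space covered by subsets {U_i}_{i∈I} such that each pair of cover elements is ε-separated. Then for every finite subset σ ⊆ X with diameter at most ε, the set of indices {i ∈ I : σ ⊆ U_i} is nonempty; equivalently, the nerve of the cover of VR_ε(X) by the complexes VR_ε(U_i) records every simplex of VR_ε(X) in at least one cover element's complex. -/
/-- If a metric space is covered by pairwise `ε`-separated subsets, then every nonempty
finite subset `σ` of diameter at most `ε` (i.e. every simplex of `VR_ε(X)`) is contained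
in at least one cover element: the index set `{i | σ ⊆ U i}` is nonempty. -/
theorem simplex_recorded_in_some_cover_element
    {X : Type*} [MetricSpace X] {I : Type*}
    (U : I → Set X) (hcov : (⋃ i, U i) = Set.univ)
    (ε : ℝ) (hsep : ∀ i j, i ≠ j → EpsSeparated ε (U i) (U j))
    (σ : Finset X) (hne : σ.Nonempty)
    (hdiam : ∀ x ∈ σ, ∀ y ∈ σ, dist x y ≤ ε) :
    {i : I | (↑σ : Set X) ⊆ U i}.Nonempty := by
  classical
  -- every point is in some cover element
  have hmem : ∀ x : X, ∃ i, x ∈ U i := by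
    intro x
    have : x ∈ ⋃ i, U i := hcov ▸ Set.mem_univ x
    simpa using this
  -- the counting function
  set f : I → ℕ := fun i => (σ.filter (· ∈ U i)).card with hf
  -- the set of attained counts is nonempty and bounded
  have hbdd : ∀ n ∈ {n : ℕ | ∃ i, f i = n}, n ≤ σ.card := by
    rintro n ⟨i, rfl⟩
    exact Finset.card_le_card (Finset.filter_subset _ _)
  obtain ⟨x₀, hx₀⟩ := hne
  obtain ⟨i₀, hi₀⟩ := hmem x₀
  have hSne : {n : ℕ | ∃ i, f i = n}.Nonempty := ⟨f i₀, i₀, rfl⟩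
  have hbdd' : BddAbove {n : ℕ | ∃ i, f i = n} := ⟨σ.card, hbdd⟩
  obtain ⟨i, hi⟩ := Nat.sSup_mem hSne hbdd'
  refine ⟨i, fun x hx => ?_⟩
  by_contra hxU
  obtain ⟨j, hj⟩ := hmem x
  have hij : i ≠ j := by rintro rfl; exact hxU hj
  -- every point of σ ∩ U i is also in U j
  have hsub : σ.filter (· ∈ U i) ⊆ σ.filter (· ∈ U j) := by
    intro y hy
    rw [Finset.mem_filter] at hy ⊢
    refine ⟨hy.1, ?_⟩
    by_contra hyj
    have := hsep i j hij y ⟨hy.2, hyj⟩ x ⟨hj, hxU⟩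
    exact absurd (hdiam y hy.1 x hx) (not_le.mpr (by simpa [dist_comm] using this))
  have hlt : f i < f j := by
    apply Finset.card_lt_card
    refine ⟨hsub, fun hsub' => ?_⟩
    have : x ∈ σ.filter (· ∈ U i) := hsub' (Finset.mem_filter.mpr ⟨hx, hj⟩)
    exact hxU (Finset.mem_filter.mp this).2
  have hle : f j ≤ sSup {n : ℕ | ∃ i, f i = n} := le_csSup hbdd' ⟨j, rfl⟩
  omega
end

section
/- Let ranks r₁, ..., r_K of observed statistics among N simulated values each yield p-values p_k = (N − r_k + 1)/N. Under the null hypothesis that each observed statistic is exchangeable with its N − 1 simulations, Hochberg's step-up procedure applied to p₁, ..., p_K (reject all hypotheses with index at most the largest k such that the k-th smallest p-value p_(k) ≤ α/(K − k + 1)) controls the family-wise error rate at level α when the p-values are independent, i.e., the probability of at least one false rejection is at most α. -/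
open MeasureTheory ProbabilityTheory
open scoped ENNReal

/-- The `k`-th smallest p-value (0-indexed) among `p 0 ω, ..., p (K-1) ω`. -/
noncomputable def orderedPValue {Ω : Type*} {K : ℕ} (p : Fin K → Ω → ℝ) (ω : Ω)
    (k : ℕ) : ℝ :=
  ((Multiset.map (fun i => p i ω) Finset.univ.val).sort (· ≤ ·)).getD k 0

namespace HochbergAux

open Finset
open scoped Classical

variable {K : ℕ} {α : ℝ}

/-- number of coordinates of `x` that are `≤ t` -/
noncomputable def cnt (x : Fin K → ℝ) (t : ℝ) : ℕ :=
  (Finset.univ.filter (fun j => x j ≤ t)).card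

/-- BH rejection count with level `α` -/
noncomputable def Rfun (α : ℝ) (x : Fin K → ℝ) : ℕ :=
  (Finset.range (K + 1)).sup (fun k => if k ≤ cnt x ((k : ℝ) * α / K) then k else 0)

lemma cnt_mono (x : Fin K → ℝ) {t s : ℝ} (h : t ≤ s) : cnt x t ≤ cnt x s := by
  apply Finset.card_le_card
  intro j hj
  simp only [mem_filter, mem_univ, true_and] at hj ⊢
  exact hj.trans h

lemma cnt_le (x : Fin K → ℝ) (t : ℝ) : cnt x t ≤ K := by
  calc cnt x t ≤ Finset.univ.card := Finset.card_filter_le _ _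
  _ = K := by simp

lemma thr_mono (hK : 0 < K) (hα : 0 ≤ α) {a b : ℕ} (h : a ≤ b) :
    (a : ℝ) * α / K ≤ (b : ℝ) * α / K := by
  have hKR : (0:ℝ) < K := by exact_mod_cast hK
  gcongr

lemma thr_nonneg (hα : 0 ≤ α) (k : ℕ) : (0:ℝ) ≤ (k : ℝ) * α / K := by positivity

lemma cnt_update_eq (x : Fin K → ℝ) (i : Fin K) {t : ℝ} (hx : x i ≤ t) (ht : 0 ≤ t) :
    cnt (Function.update x i 0) t = cnt x t := by
  unfold cnt
  congr 1
  ext j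
  simp only [mem_filter, mem_univ, true_and]
  rcases eq_or_ne j i with rfl | hji
  · simp [Function.update_self, ht, hx]
  · simp [Function.update_of_ne hji]

lemma Rfun_le (α : ℝ) (x : Fin K → ℝ) : Rfun α x ≤ K := by
  apply Finset.sup_le
  intro k hk
  simp only [Finset.mem_range] at hk
  split
  · omega
  · omega

lemma Rfun_spec (α : ℝ) (x : Fin K → ℝ) :
    Rfun α x ≤ cnt x ((Rfun α x : ℝ) * α / K) := by
  obtain ⟨k, hk, hsup⟩ := Finset.exists_mem_eq_sup (Finset.range (K + 1))
    ⟨0, by simp⟩ (fun k => if k ≤ cnt x ((k : ℝ) * α / K) then k else 0)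
  have hsup' : Rfun α x = if k ≤ cnt x ((k : ℝ) * α / K) then k else 0 := hsup
  by_cases h : k ≤ cnt x ((k : ℝ) * α / K)
  · rw [if_pos h] at hsup'
    rw [hsup']; exact h
  · rw [if_neg h] at hsup'
    rw [hsup']; simp

lemma le_Rfun (α : ℝ) (x : Fin K → ℝ) {k : ℕ} (hk : k ≤ K)
    (h : k ≤ cnt x ((k : ℝ) * α / K)) : k ≤ Rfun α x := by
  have hmem : k ∈ Finset.range (K + 1) := Finset.mem_range.mpr (by omega)
  have := Finset.le_sup
    (f := fun k : ℕ => (if k ≤ cnt x ((k : ℝ) * α / K) then k else 0 : ℕ)) hmem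
  simp only [if_pos h] at this
  exact this

lemma cnt_Rfun_eq (hK : 0 < K) (hα : 0 ≤ α) (x : Fin K → ℝ) :
    cnt x ((Rfun α x : ℝ) * α / K) = Rfun α x := by
  refine le_antisymm ?_ (Rfun_spec α x)
  by_contra h
  push_neg at h
  set m := cnt x ((Rfun α x : ℝ) * α / K) with hm
  have hmK : m ≤ K := cnt_le x _
  have hmono : cnt x ((Rfun α x : ℝ) * α / K) ≤ cnt x ((m : ℝ) * α / K) :=
    cnt_mono x (thr_mono hK hα h.le)
  have : m ≤ Rfun α x := le_Rfun α x hmK (hm ▸ hmono)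
  omega

lemma one_le_Rfun_update (hK : 0 < K) (hα : 0 ≤ α) (x : Fin K → ℝ) (i : Fin K) :
    1 ≤ Rfun α (Function.update x i 0) := by
  apply le_Rfun α _ hK
  have ht : (0:ℝ) ≤ ((1:ℕ) : ℝ) * α / K := thr_nonneg hα 1
  exact Finset.card_pos.mpr ⟨i, by simpa [Function.update_self] using ht⟩

/-- the key leave-one-out lemma: if coordinate `i` is below the leave-one-out BH
threshold, then the BH rejection count is unchanged by zeroing out coordinate `i`. -/
lemma key_main (hK : 0 < K) (hα : 0 ≤ α) (x : Fin K → ℝ) (i : Fin K)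
    (h : x i ≤ (Rfun α (Function.update x i 0) : ℝ) * α / K) :
    Rfun α x = Rfun α (Function.update x i 0) := by
  set x' := Function.update x i 0 with hx'
  set R' := Rfun α x' with hR'
  have hc : cnt x' ((R' : ℝ) * α / K) = cnt x ((R' : ℝ) * α / K) :=
    cnt_update_eq x i h (thr_nonneg hα R')
  have h1 : R' ≤ cnt x ((R' : ℝ) * α / K) := hc ▸ Rfun_spec α x'
  have hR'K : R' ≤ K := Rfun_le α x'
  have h2 : R' ≤ Rfun α x := le_Rfun α x hR'K h1
  have hxi : x i ≤ (Rfun α x : ℝ) * α / K := h.trans (thr_mono hK hα h2)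
  have hc2 : cnt x' ((Rfun α x : ℝ) * α / K) = cnt x ((Rfun α x : ℝ) * α / K) :=
    cnt_update_eq x i hxi (thr_nonneg hα _)
  have h3 : Rfun α x ≤ cnt x' ((Rfun α x : ℝ) * α / K) := by
    rw [hc2]; exact Rfun_spec α x
  have h4 : Rfun α x ≤ R' := le_Rfun α x' (Rfun_le α x) h3
  omega

lemma key_iff (hK : 0 < K) (hα : 0 ≤ α) (x : Fin K → ℝ) (i : Fin K) :
    x i ≤ (Rfun α (Function.update x i 0) : ℝ) * α / K ↔
      x i ≤ (Rfun α x : ℝ) * α / K := by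
  constructor
  · intro h
    rw [key_main hK hα x i h]
    exact h
  · intro h
    set x' := Function.update x i 0 with hx'
    have hc : cnt x' ((Rfun α x : ℝ) * α / K) = cnt x ((Rfun α x : ℝ) * α / K) :=
      cnt_update_eq x i h (thr_nonneg hα _)
    have h3 : Rfun α x ≤ cnt x' ((Rfun α x : ℝ) * α / K) := by
      rw [hc]; exact Rfun_spec α x
    have h4 : Rfun α x ≤ Rfun α x' := le_Rfun α x' (Rfun_le α x) h3
    exact h.trans (thr_mono hK hα h4)

/-- Pointwise identity: the sum of leave-one-out "FDR contributions" equals the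
indicator of at least one BH rejection. -/
lemma sum_f_eq (hK : 0 < K) (hα : 0 ≤ α) (x : Fin K → ℝ) :
    ∑ i : Fin K, (if x i ≤ (Rfun α (Function.update x i 0) : ℝ) * α / K
        then ((Rfun α (Function.update x i 0) : ℕ) : ℝ≥0∞)⁻¹ else 0)
      = if 1 ≤ Rfun α x then 1 else 0 := by
  by_cases hR : 1 ≤ Rfun α x
  · rw [if_pos hR]
    have hterm : ∀ i : Fin K,
        (if x i ≤ (Rfun α (Function.update x i 0) : ℝ) * α / K
          then ((Rfun α (Function.update x i 0) : ℕ) : ℝ≥0∞)⁻¹ else 0)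
        = if x i ≤ (Rfun α x : ℝ) * α / K then ((Rfun α x : ℕ) : ℝ≥0∞)⁻¹ else 0 := by
      intro i
      by_cases h : x i ≤ (Rfun α (Function.update x i 0) : ℝ) * α / K
      · have heq := key_main hK hα x i h
        rw [if_pos h, if_pos ((key_iff hK hα x i).mp h), heq]
      · rw [if_neg h, if_neg (fun hc => h ((key_iff hK hα x i).mpr hc))]
    simp_rw [hterm]
    rw [← Finset.sum_filter, Finset.sum_const]
    have hcard : (Finset.univ.filter
        (fun i : Fin K => x i ≤ (Rfun α x : ℝ) * α / K)).card = Rfun α x :=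
      cnt_Rfun_eq hK hα x
    rw [hcard, nsmul_eq_mul]
    exact ENNReal.mul_inv_cancel
      (Nat.cast_ne_zero.mpr (by omega)) (ENNReal.natCast_ne_top _)
  · rw [if_neg hR]
    apply Finset.sum_eq_zero
    intro i _
    rw [if_neg]
    intro h
    have heq := key_main hK hα x i h
    have h1 := one_le_Rfun_update hK hα x i
    omega

section Measurability

variable {β : Type*} [MeasurableSpace β]

lemma measurable_max_nat {f g : β → ℕ} (hf : Measurable f) (hg : Measurable g) :
    Measurable fun ω => max (f ω) (g ω) := by
  apply measurable_to_countable'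
  intro n
  have : (fun ω => max (f ω) (g ω)) ⁻¹' {n} =
      (f ⁻¹' {n} ∩ g ⁻¹' Set.Iic n) ∪ (g ⁻¹' {n} ∩ f ⁻¹' Set.Iic n) := by
    ext ω
    simp only [Set.mem_preimage, Set.mem_singleton_iff, Set.mem_Iic,
      Set.mem_inter_iff, Set.mem_union]
    omega
  rw [this]
  exact ((hf trivial).inter (hg trivial)).union ((hg trivial).inter (hf trivial))

lemma measurable_nat_sup {ι : Type*} (s : Finset ι) (f : ι → β → ℕ)
    (hf : ∀ i, Measurable (f i)) : Measurable fun ω => s.sup (fun i => f i ω) := by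
  induction s using Finset.induction_on with
  | empty => simpa using measurable_const
  | insert a s ha ih =>
    simp only [Finset.sup_insert]
    exact measurable_max_nat (hf _) ih

lemma measurable_cnt {g : β → Fin K → ℝ} (hg : ∀ j, Measurable fun v => g v j)
    (t : ℝ) : Measurable fun v => cnt (g v) t := by
  have heq : (fun v => cnt (g v) t)
      = fun v => ∑ j : Fin K, if g v j ≤ t then 1 else 0 := by
    funext v
    exact Finset.card_filter _ _
  rw [heq]
  apply Finset.measurable_sum
  intro j _
  exact Measurable.ite (measurableSet_le (hg j) measurable_const)
    measurable_const measurable_const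

lemma measurable_Rfun {g : β → Fin K → ℝ} (hg : ∀ j, Measurable fun v => g v j) :
    Measurable fun v => Rfun α (g v) := by
  unfold Rfun
  apply measurable_nat_sup
  intro k
  exact Measurable.ite ((measurable_cnt hg ((k : ℝ) * α / K)) trivial)
    measurable_const measurable_const

end Measurability

/-- counting coordinates below `c` via the sorted list -/
lemma cnt_eq_countP (x : Fin K → ℝ) (c : ℝ) :
    cnt x c = ((Multiset.map x Finset.univ.val).sort (· ≤ ·)).countP
      (fun a => decide (a ≤ c)) := by
  unfold cnt
  rw [← Multiset.coe_countP, Multiset.sort_eq, Multiset.countP_map]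
  rfl

lemma sorted_count {l : List ℝ} {c : ℝ} {j : ℕ} (hj : j < l.length)
    (hs : l.Pairwise (· ≤ ·)) (hc : l.getD j 0 ≤ c) :
    j + 1 ≤ l.countP (fun a => decide (a ≤ c)) := by
  have h2 : (l.take (j+1)).countP (fun a => decide (a ≤ c)) = (l.take (j+1)).length := by
    rw [List.countP_eq_length]
    intro a ha
    rw [List.mem_take_iff_getElem] at ha
    obtain ⟨m, hm, rfl⟩ := ha
    simp only [decide_eq_true_eq]
    have hmj : m ≤ j := by omega
    have hml : m < l.length := by omega
    have := hs.rel_get_of_le (a := ⟨m, hml⟩) (b := ⟨j, hj⟩) (by exact hmj)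
    simp only [List.get_eq_getElem] at this
    calc l[m] ≤ l[j] := this
    _ ≤ c := by rwa [List.getD_eq_getElem _ _ hj] at hc
  have h3 : (l.take (j+1)).length = j + 1 := by
    rw [List.length_take]; omega
  calc j + 1 = (l.take (j+1)).countP (fun a => decide (a ≤ c)) := by rw [h2, h3]
  _ ≤ l.countP (fun a => decide (a ≤ c)) := (List.take_sublist _ _).countP_le

/-- the Hochberg threshold is below the BH threshold -/
lemma hochberg_le_bh (hK : 0 < K) (hα : 0 ≤ α) (j : Fin K) :
    α / ((K : ℝ) - (j : ℕ)) ≤ (((j : ℕ) + 1 : ℕ) : ℝ) * α / K := by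
  have h1 : (0:ℝ) < K := by exact_mod_cast hK
  have hjK : ((j : ℕ) : ℝ) + 1 ≤ K := by exact_mod_cast j.isLt
  have h2 : (0:ℝ) < (K : ℝ) - (j : ℕ) := by linarith
  rw [div_le_div_iff₀ h2 h1]
  have hj0 : (0:ℝ) ≤ ((j : ℕ) : ℝ) := Nat.cast_nonneg _
  have hKle : (K : ℝ) ≤ (((j : ℕ) : ℝ) + 1) * ((K : ℝ) - (j : ℕ)) := by
    nlinarith [mul_nonneg hj0 (by linarith : (0:ℝ) ≤ (K : ℝ) - (j : ℕ) - 1)]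
  have := mul_le_mul_of_nonneg_left hKle hα
  push_cast
  nlinarith

end HochbergAux

/-- Hochberg's step-up procedure controls the family-wise error rate: for `K` independent
super-uniform p-values under the null, the probability that Hochberg's procedure rejects
at least one (necessarily true) hypothesis — i.e. that some ordered p-value `p_(k)`
satisfies `p_(k) ≤ α/(K − k + 1)` — is at most `α`. -/
theorem hochberg_fwer_control
    {Ω : Type*} [MeasurableSpace Ω] (μ : Measure Ω) [IsProbabilityMeasure μ]
    (K : ℕ) (hK : 0 < K) (p : Fin K → Ω → ℝ)
    (hmeas : ∀ k, Measurable (p k))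
    (hindep : iIndepFun p μ)
    (hsuper : ∀ k, ∀ t : ℝ, 0 ≤ t → t ≤ 1 →
      μ {ω | p k ω ≤ t} ≤ ENNReal.ofReal t)
    (α : ℝ) (hα0 : 0 ≤ α) (hα1 : α ≤ 1) :
    μ {ω | ∃ j : Fin K, orderedPValue p ω j ≤ α / ((K : ℝ) - j)}
      ≤ ENNReal.ofReal α := by
  classical
  open HochbergAux in
  set x : Ω → Fin K → ℝ := fun ω j => p j ω with hxdef
  set R : Ω → ℕ := fun ω => Rfun α (x ω) with hRdef
  set Ri : Fin K → Ω → ℕ :=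
    fun i ω => Rfun α (Function.update (x ω) i 0) with hRidef
  have hKR : (0:ℝ) < K := by exact_mod_cast hK
  -- measurability
  have hxmeas : ∀ j, Measurable fun ω => x ω j := fun j => hmeas j
  have hRmeas : Measurable R := measurable_Rfun hxmeas
  have hupd : ∀ i j, Measurable fun ω => Function.update (x ω) i 0 j := by
    intro i j
    rcases eq_or_ne j i with rfl | h
    · simp only [Function.update_self]; exact measurable_const
    · simp only [Function.update_of_ne h]; exact hmeas j
  have hRimeas : ∀ i, Measurable (Ri i) := fun i => measurable_Rfun (hupd i)
  -- Step 1: the Hochberg event is contained in the BH event {R ≥ 1}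
  have hsub : {ω | ∃ j : Fin K, orderedPValue p ω j ≤ α / ((K : ℝ) - j)}
      ⊆ {ω | 1 ≤ R ω} := by
    rintro ω ⟨j, hj⟩
    have hlen : ((Multiset.map (x ω) Finset.univ.val).sort (· ≤ ·)).length = K := by
      rw [Multiset.length_sort, Multiset.card_map]
      simp
    have hjl : (j : ℕ) < ((Multiset.map (x ω) Finset.univ.val).sort (· ≤ ·)).length := by
      rw [hlen]; exact j.isLt
    have hcount := sorted_count hjl (Multiset.pairwise_sort _ _) hj
    have hcnt : (j : ℕ) + 1 ≤ cnt (x ω) (α / ((K : ℝ) - (j:ℕ))) := by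
      rw [cnt_eq_countP]
      exact hcount
    have hcnt2 : (j : ℕ) + 1 ≤ cnt (x ω) ((((j:ℕ) + 1 : ℕ) : ℝ) * α / K) :=
      hcnt.trans (cnt_mono _ (hochberg_le_bh hK hα0 j))
    have hle : (j : ℕ) + 1 ≤ R ω := le_Rfun α (x ω) j.isLt hcnt2
    simp only [Set.mem_setOf_eq]
    omega
  refine le_trans (measure_mono hsub) ?_
  -- Step 2: the FDR-style leave-one-out bound
  set g : Fin K → ℕ → Ω → ℝ≥0∞ := fun i r ω =>
    if Ri i ω = r ∧ p i ω ≤ (r : ℝ) * α / K then ((r : ℕ) : ℝ≥0∞)⁻¹ else 0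
    with hgdef
  have hmeasset : MeasurableSet {ω | 1 ≤ R ω} := hRmeas trivial
  have hpt : ∀ ω, Set.indicator {ω' | 1 ≤ R ω'} (fun _ => (1:ℝ≥0∞)) ω
      = ∑ i : Fin K, ∑ r ∈ Finset.Icc 1 K, g i r ω := by
    intro ω
    have h1 : ∀ i : Fin K, ∑ r ∈ Finset.Icc 1 K, g i r ω
        = if x ω i ≤ (Rfun α (Function.update (x ω) i 0) : ℝ) * α / K
          then ((Rfun α (Function.update (x ω) i 0) : ℕ) : ℝ≥0∞)⁻¹ else 0 := by
      intro i
      have hmem : Ri i ω ∈ Finset.Icc 1 K :=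
        Finset.mem_Icc.mpr ⟨one_le_Rfun_update hK hα0 _ i, Rfun_le α _⟩
      rw [Finset.sum_eq_single (Ri i ω)]
      · show (if Ri i ω = Ri i ω ∧ p i ω ≤ ((Ri i ω : ℕ) : ℝ) * α / K
            then ((Ri i ω : ℕ) : ℝ≥0∞)⁻¹ else 0) = _
        split_ifs with h1' h2' h2'
        · rfl
        · exact absurd h1'.2 h2'
        · exact absurd ⟨rfl, h2'⟩ h1'
        · rfl
      · intro r _ hne
        exact if_neg (fun hc => hne hc.1.symm)
      · intro hnot
        exact absurd hmem hnot
    rw [Set.indicator_apply]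
    rw [Finset.sum_congr rfl (fun i _ => h1 i), sum_f_eq hK hα0 (x ω)]
    split_ifs with h1' h2' h2'
    · rfl
    · exact absurd h1' h2'
    · exact absurd h2' h1'
    · rfl
  -- measurability of each g i r
  have hgmeas : ∀ i r, Measurable (g i r) := by
    intro i r
    apply Measurable.ite ?_ measurable_const measurable_const
    have hA : MeasurableSet (Ri i ⁻¹' {r} ∩ p i ⁻¹' Set.Iic ((r : ℝ) * α / K)) :=
      (hRimeas i trivial).inter ((hmeas i) measurableSet_Iic)
    exact hA
  -- the integral computation
  calc μ {ω | 1 ≤ R ω}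
      = ∫⁻ ω, Set.indicator {ω' | 1 ≤ R ω'} (fun _ => (1:ℝ≥0∞)) ω ∂μ := by
        rw [lintegral_indicator hmeasset]
        simp
    _ = ∫⁻ ω, ∑ i : Fin K, ∑ r ∈ Finset.Icc 1 K, g i r ω ∂μ := lintegral_congr hpt
    _ = ∑ i : Fin K, ∫⁻ ω, ∑ r ∈ Finset.Icc 1 K, g i r ω ∂μ :=
        lintegral_finset_sum _ (fun i _ => Finset.measurable_sum _ (fun r _ => hgmeas i r))
    _ ≤ ∑ _i : Fin K, ENNReal.ofReal (α / K) := by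
        apply Finset.sum_le_sum
        intro i _
        rw [lintegral_finset_sum _ (fun r _ => hgmeas i r)]
        -- independence of Ri i and p i
        have hind : IndepFun (Ri i) (p i) μ := by
          have h2 := hindep.indepFun_finset ({i}ᶜ) ({i}) disjoint_compl_left hmeas
          let φ : ({ j // j ∈ ({i}ᶜ : Finset (Fin K)) } → ℝ) → ℕ := fun v =>
            Rfun α (fun j => if h : j = i then 0 else v ⟨j, by simp [h]⟩)
          let ψ : ({ j // j ∈ ({i} : Finset (Fin K)) } → ℝ) → ℝ := fun v => v ⟨i, by simp⟩
          have hφ : Measurable φ := by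
            apply measurable_Rfun
            intro j
            by_cases h : j = i
            · simp only [h, dif_pos]; exact measurable_const
            · simp only [h, dif_neg, not_false_iff]
              exact measurable_pi_apply _
          have hψ : Measurable ψ := measurable_pi_apply _
          have h3 := h2.comp hφ hψ
          have heq1 : (φ ∘ fun a (j : ({i}ᶜ : Finset (Fin K))) => p j a) = Ri i := by
            funext ω
            simp only [Function.comp_apply, hRidef, φ]
            congr 1
            funext j
            by_cases h : j = i
            · subst h; simp [Function.update_self]
            · simp [h, Function.update_of_ne h]; rfl
          have heq2 : (ψ ∘ fun a (j : ({i} : Finset (Fin K))) => p j a) = p i := by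
            funext ω
            rfl
          rwa [heq1, heq2] at h3
        -- bound each term
        have hterm : ∀ r ∈ Finset.Icc 1 K, ∫⁻ ω, g i r ω ∂μ
            ≤ ENNReal.ofReal (α / K) * μ (Ri i ⁻¹' {r}) := by
          intro r hr
          rw [Finset.mem_Icc] at hr
          have hgind : g i r = Set.indicator
              ((Ri i ⁻¹' {r}) ∩ (p i ⁻¹' Set.Iic ((r : ℝ) * α / K)))
              (fun _ => ((r : ℕ) : ℝ≥0∞)⁻¹) := by
            funext ω
            rw [Set.indicator_apply]
            show (if Ri i ω = r ∧ p i ω ≤ (r : ℝ) * α / K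
                then ((r : ℕ) : ℝ≥0∞)⁻¹ else 0) = _
            split_ifs with h1' h2' h2'
            · rfl
            · exact absurd ⟨h1'.1, h1'.2⟩ h2'
            · exact absurd ⟨h2'.1, h2'.2⟩ h1'
            · rfl
          have hABmeas : MeasurableSet
              ((Ri i ⁻¹' {r}) ∩ (p i ⁻¹' Set.Iic ((r : ℝ) * α / K))) :=
            (hRimeas i trivial).inter ((hmeas i) measurableSet_Iic)
          rw [hgind, lintegral_indicator hABmeas, setLIntegral_const]
          -- independence factorization
          have hfact : μ ((Ri i ⁻¹' {r}) ∩ (p i ⁻¹' Set.Iic ((r : ℝ) * α / K)))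
              = μ (Ri i ⁻¹' {r}) * μ (p i ⁻¹' Set.Iic ((r : ℝ) * α / K)) :=
            hind.measure_inter_preimage_eq_mul _ _ trivial measurableSet_Iic
          rw [hfact]
          -- super-uniformity bound
          have ht0 : (0:ℝ) ≤ (r : ℝ) * α / K := thr_nonneg hα0 r
          have ht1 : (r : ℝ) * α / K ≤ 1 := by
            have hrK : (r : ℝ) ≤ K := by exact_mod_cast hr.2
            have : (r : ℝ) * α / K ≤ α := by
              rw [div_le_iff₀ hKR]
              nlinarith
            linarith
          have hsup2 : μ (p i ⁻¹' Set.Iic ((r : ℝ) * α / K))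
              ≤ ENNReal.ofReal ((r : ℝ) * α / K) := hsuper i _ ht0 ht1
          have hofr : ENNReal.ofReal ((r : ℝ) * α / K)
              = (r : ℝ≥0∞) * ENNReal.ofReal (α / K) := by
            rw [show (r : ℝ) * α / K = (r : ℝ) * (α / K) by ring,
              ENNReal.ofReal_mul (Nat.cast_nonneg r), ENNReal.ofReal_natCast]
          have hr0 : ((r : ℕ) : ℝ≥0∞) ≠ 0 := Nat.cast_ne_zero.mpr (by omega)
          have hrt : ((r : ℕ) : ℝ≥0∞) ≠ ⊤ := ENNReal.natCast_ne_top r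
          calc ((r : ℕ) : ℝ≥0∞)⁻¹ * (μ (Ri i ⁻¹' {r}) * μ (p i ⁻¹' Set.Iic ((r : ℝ) * α / K)))
              ≤ ((r : ℕ) : ℝ≥0∞)⁻¹ * (μ (Ri i ⁻¹' {r})
                * ((r : ℝ≥0∞) * ENNReal.ofReal (α / K))) := by
                gcongr
                rw [← hofr]
                exact hsup2
            _ = (((r : ℕ) : ℝ≥0∞)⁻¹ * (r : ℝ≥0∞))
                * (ENNReal.ofReal (α / K) * μ (Ri i ⁻¹' {r})) := by ring
            _ = ENNReal.ofReal (α / K) * μ (Ri i ⁻¹' {r}) := by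
                rw [ENNReal.inv_mul_cancel hr0 hrt, one_mul]
        calc ∑ r ∈ Finset.Icc 1 K, ∫⁻ ω, g i r ω ∂μ
            ≤ ∑ r ∈ Finset.Icc 1 K, ENNReal.ofReal (α / K) * μ (Ri i ⁻¹' {r}) :=
              Finset.sum_le_sum hterm
          _ = ENNReal.ofReal (α / K) * ∑ r ∈ Finset.Icc 1 K, μ (Ri i ⁻¹' {r}) := by
              rw [Finset.mul_sum]
          _ ≤ ENNReal.ofReal (α / K) := by
              have hdisj : (Finset.Icc 1 K : Set ℕ).PairwiseDisjoint
                  (fun r => Ri i ⁻¹' {r}) := by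
                intro a _ b _ hab
                apply Set.disjoint_left.mpr
                intro ω ha hb
                simp only [Set.mem_preimage, Set.mem_singleton_iff] at ha hb
                exact hab (ha ▸ hb ▸ rfl)
              have hunion : μ (⋃ r ∈ Finset.Icc 1 K, Ri i ⁻¹' {r})
                  = ∑ r ∈ Finset.Icc 1 K, μ (Ri i ⁻¹' {r}) :=
                measure_biUnion_finset hdisj (fun r _ => hRimeas i trivial)
              rw [← hunion]
              exact le_trans (mul_le_mul_right prob_le_one _) (le_of_eq (mul_one _))
    _ = ENNReal.ofReal α := by
        rw [Finset.sum_const, Finset.card_univ, Fintype.card_fin, nsmul_eq_mul]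
        rw [← ENNReal.ofReal_natCast K, ← ENNReal.ofReal_mul (Nat.cast_nonneg K)]
        congr 1
        field_simp
end
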